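/- (The fairness program satisfies the fairness specification.) In any event structure satisfying the event-structure axioms, if all four clauses (ψ₁), (ψ₂), (ψ₃), (ψ₄) of Fair-Pg(φ,t,l,a) hold and the strong communication-fairness condition FairSend(l) holds, then the specification Fair(φ,t,l) holds, i.e., all three clauses (φ₁), (φ₂), (φ₃) hold. -/

import Mathlib

/-- An event structure over agents `AG`, links `Links`, local actions `Act`,
values `Val` (with a distinguished null value `bot`), and local variables `X`
(where `mv l` is the variable `msg(l)` recording the message sent on link `l`).
Local states are assignments of values to variables, i.e. functions `X → Val`.
An event of kind `Sum.inl l` is a receive on link `l`; an event of kind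
`Sum.inr a` is a local `a`-event.  The fields `lt i` are the local strict total
orders `≺ᵢ` on the events of agent `i`, and `send` assigns to each receive
event its corresponding send event.  The event-structure axioms are the
`lt_*` order axioms and the `rcv_*` axioms about receive events. -/
structure EventStructure (AG Links Act Val X : Type) (source dest : Links → AG)
    (bot : Val) (mv : Links → X) where
  E : Type
  agent : E → AG
  kind : E → Links ⊕ Act
  val : E → Val
  stateBefore : E → X → Val
  stateAfter : E → X → Val
  initstate : AG → X → Val
  lt : AG → E → E → Prop
  send : E → E
  lt_irrefl : ∀ i e, ¬ lt i e e
  lt_trans : ∀ i e₁ e₂ e₃, lt i e₁ e₂ → lt i e₂ e₃ → lt i e₁ e₃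
  lt_total : ∀ i e e', agent e = i → agent e' = i → lt i e e' ∨ e = e' ∨ lt i e' e
  rcv_agent : ∀ e l, kind e = Sum.inl l → agent e = dest l
  rcv_send_agent : ∀ e l, kind e = Sum.inl l → agent (send e) = source l
  rcv_val : ∀ e l, kind e = Sum.inl l → val e = stateAfter (send e) (mv l)
  rcv_val_ne : ∀ e l, kind e = Sum.inl l → val e ≠ bot

namespace EventStructure

variable {AG Links Act Val X : Type} {source dest : Links → AG} {bot : Val}
  {mv : Links → X}

/-- `e ⪯ᵢ e'`: the reflexive closure of the local order `≺ᵢ`. -/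
def locLe (es : EventStructure AG Links Act Val X source dest bot mv) (i : AG)
    (e e' : es.E) : Prop :=
  es.lt i e e' ∨ e = e'

/-- Clause (ψ₁) of `Fair-Pg(φ,t,l,a)`: only `a`-events of agent `i` set `msg(l)`
to a non-null value. -/
def psi1 (es : EventStructure AG Links Act Val X source dest bot mv)
    (i : AG) (l : Links) (a : Act) : Prop :=
  ∀ e, es.agent e = i → es.stateAfter e (mv l) ≠ bot → es.kind e = Sum.inr a

/-- Clause (ψ₂): agent `i` performs action `a` only if the precondition `phi`
holds of its local state. -/
def psi2 (es : EventStructure AG Links Act Val X source dest bot mv)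
    (i : AG) (a : Act) (phi : (X → Val) → Prop) : Prop :=
  ∀ e, es.agent e = i → es.kind e = Sum.inr a → phi (es.stateBefore e)

/-- Clause (ψ₃): the effect of an `a`-event of agent `i` is to set `msg(l)` to
the term `t` evaluated at the state before the event. -/
def psi3 (es : EventStructure AG Links Act Val X source dest bot mv)
    (i : AG) (l : Links) (a : Act) (t : (X → Val) → Val) : Prop :=
  ∀ e, es.agent e = i → es.kind e = Sum.inr a →
    es.stateAfter e (mv l) = t (es.stateBefore e)

/-- Clause (ψ₄), the weak-fairness clause. -/
def psi4 (es : EventStructure AG Links Act Val X source dest bot mv)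
    (i : AG) (a : Act) (phi : (X → Val) → Prop) : Prop :=
  ((∃ e, es.agent e = i) ∧
    ∀ e, es.agent e = i → ∃ e', es.agent e' = i ∧ es.locLe i e e' ∧
      (¬ phi (es.stateAfter e') ∨ es.kind e' = Sum.inr a)) ∨
  ((¬ ∃ e, es.agent e = i) ∧ ¬ phi (es.initstate i))

/-- The strong communication-fairness condition `FairSend(l)`, where
`i = source l`. -/
def FairSend (es : EventStructure AG Links Act Val X source dest bot mv)
    (i : AG) (l : Links) : Prop :=
  (∀ e, es.agent e = i → ∃ e', es.agent e' = i ∧ es.locLe i e e' ∧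
      es.stateAfter e' (mv l) ≠ bot) →
  ∀ e, es.agent e = i → ∃ e', es.kind e' = Sum.inl l ∧ es.locLe i e (es.send e')

/-- Clause (φ₁) of the specification `Fair(φ,t,l)`: the precondition held at
the sender's state when any message received on `l` was sent. -/
def phi1spec (es : EventStructure AG Links Act Val X source dest bot mv)
    (l : Links) (phi : (X → Val) → Prop) : Prop :=
  ∀ e', es.kind e' = Sum.inl l → phi (es.stateBefore (es.send e'))

/-- Clause (φ₂): every message received on `l` is `t` evaluated at the sender's
state at the time of sending. -/
def phi2spec (es : EventStructure AG Links Act Val X source dest bot mv)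
    (l : Links) (t : (X → Val) → Val) : Prop :=
  ∀ e', es.kind e' = Sum.inl l → es.val e' = t (es.stateBefore (es.send e'))

/-- Clause (φ₃), the liveness clause of `Fair(φ,t,l)`, where `i = source l`. -/
def phi3spec (es : EventStructure AG Links Act Val X source dest bot mv)
    (i : AG) (l : Links) (phi : (X → Val) → Prop) : Prop :=
  ((∃ e, es.agent e = i) ∧
    ∀ e, es.agent e = i → ∃ e', es.agent e' = i ∧ es.locLe i e e' ∧
      ¬ phi (es.stateAfter e')) ∨
  ((¬ ∃ e, es.agent e = i) ∧ ¬ phi (es.initstate i)) ∨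
  ((∃ e, es.agent e = i) ∧
    ∀ e, es.agent e = i → ∃ e', es.kind e' = Sum.inl l ∧ es.locLe i e (es.send e'))

/-- The specification `Fair(φ,t,l)`: conjunction of (φ₁), (φ₂), (φ₃). -/
def FairSpec (es : EventStructure AG Links Act Val X source dest bot mv)
    (i : AG) (l : Links) (phi : (X → Val) → Prop) (t : (X → Val) → Val) : Prop :=
  es.phi1spec l phi ∧ es.phi2spec l t ∧ es.phi3spec i l phi

end EventStructure

/-! By (ψ₁) the send event of every receive on `l` is an `a`-event, since it leaves a
non-null value in `msg(l)`; (ψ₂) and (ψ₃) then give (φ₁) and (φ₂). For (φ₃), either `φ`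
is falsified infinitely often at `i`, or it holds after every event from some `e₀` on.
In the latter case (ψ₄) yields infinitely many `a`-events, each of which sets `msg(l)` to
a value `t s ≠ ⊥`, so `FairSend(l)` supplies the receives. -/

namespace EventStructure

variable {AG Links Act Val X : Type} {source dest : Links → AG} {bot : Val}
  {mv : Links → X} (es : EventStructure AG Links Act Val X source dest bot mv)

theorem locLe_trans {i : AG} {e₁ e₂ e₃ : es.E} :
    es.locLe i e₁ e₂ → es.locLe i e₂ e₃ → es.locLe i e₁ e₃ := by
  rintro (h₁₂ | rfl) (h₂₃ | rfl)
  · exact Or.inl (es.lt_trans i _ _ _ h₁₂ h₂₃)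
  · exact Or.inl h₁₂
  · exact Or.inl h₂₃
  · exact Or.inr rfl

theorem exists_locLe_locLe {i : AG} {e e' : es.E} (he : es.agent e = i)
    (he' : es.agent e' = i) :
    ∃ m, es.agent m = i ∧ es.locLe i e m ∧ es.locLe i e' m := by
  rcases es.lt_total i e e' he he' with h | rfl | h
  · exact ⟨e', he', Or.inl h, Or.inr rfl⟩
  · exact ⟨e, he, Or.inr rfl, Or.inr rfl⟩
  · exact ⟨e, he, Or.inr rfl, Or.inl h⟩

theorem stateAfter_send_ne_bot {e : es.E} {l : Links} (he : es.kind e = Sum.inl l) :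
    es.stateAfter (es.send e) (mv l) ≠ bot :=
  es.rcv_val e l he ▸ es.rcv_val_ne e l he

section Program

variable {l : Links} {a : Act}

theorem kind_send_of_psi1 (h1 : es.psi1 (source l) l a) {e : es.E}
    (he : es.kind e = Sum.inl l) : es.kind (es.send e) = Sum.inr a :=
  h1 _ (es.rcv_send_agent e l he) (es.stateAfter_send_ne_bot he)

theorem phi1spec_of_psi (phi : (X → Val) → Prop) (h1 : es.psi1 (source l) l a)
    (h2 : es.psi2 (source l) a phi) : es.phi1spec l phi := fun e he =>
  h2 _ (es.rcv_send_agent e l he) (es.kind_send_of_psi1 h1 he)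

theorem phi2spec_of_psi (t : (X → Val) → Val) (h1 : es.psi1 (source l) l a)
    (h3 : es.psi3 (source l) l a t) : es.phi2spec l t := fun e he =>
  (es.rcv_val e l he).trans (h3 _ (es.rcv_send_agent e l he) (es.kind_send_of_psi1 h1 he))

theorem frequently_msg_ne_bot {i : AG} {phi : (X → Val) → Prop} {t : (X → Val) → Val}
    (ht : ∀ s, t s ≠ bot) (h3 : es.psi3 i l a t)
    (h4 : ∀ e, es.agent e = i → ∃ e', es.agent e' = i ∧ es.locLe i e e' ∧
      (¬ phi (es.stateAfter e') ∨ es.kind e' = Sum.inr a))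
    {e₀ : es.E} (he₀ : es.agent e₀ = i)
    (hstable : ∀ e, es.agent e = i → es.locLe i e₀ e → phi (es.stateAfter e)) :
    ∀ e, es.agent e = i → ∃ e', es.agent e' = i ∧ es.locLe i e e' ∧
      es.stateAfter e' (mv l) ≠ bot := by
  intro e he
  obtain ⟨m, hm, hem, he₀m⟩ := es.exists_locLe_locLe he he₀
  obtain ⟨e', he', hme', hfair⟩ := h4 m hm
  have hphi : phi (es.stateAfter e') := hstable e' he' (es.locLe_trans he₀m hme')
  have ha : es.kind e' = Sum.inr a := hfair.resolve_left (not_not_intro hphi)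
  exact ⟨e', he', es.locLe_trans hem hme', h3 e' he' ha ▸ ht _⟩

theorem phi3spec_of_psi {i : AG} {phi : (X → Val) → Prop} {t : (X → Val) → Val}
    (ht : ∀ s, t s ≠ bot) (h3 : es.psi3 i l a t) (h4 : es.psi4 i a phi)
    (hfs : es.FairSend i l) : es.phi3spec i l phi := by
  rcases h4 with ⟨hex, h4⟩ | hnone
  · by_cases hfalsified : ∀ e, es.agent e = i → ∃ e', es.agent e' = i ∧
        es.locLe i e e' ∧ ¬ phi (es.stateAfter e')
    · exact Or.inl ⟨hex, hfalsified⟩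
    · push Not at hfalsified
      obtain ⟨e₀, he₀, hstable⟩ := hfalsified
      exact Or.inr (Or.inr ⟨hex, hfs (es.frequently_msg_ne_bot ht h3 h4 he₀ hstable)⟩)
  · exact Or.inr (Or.inl hnone)

end Program

end EventStructure

theorem fair_pg_satisfies_fair_spec_general
    {AG Links Act Val X : Type} {source dest : Links → AG} {bot : Val}
    {mv : Links → X}
    (es : EventStructure AG Links Act Val X source dest bot mv)
    (i : AG) (l : Links) (hsrc : source l = i)
    (a : Act)
    (phi : (X → Val) → Prop) (t : (X → Val) → Val) (ht : ∀ s, t s ≠ bot)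
    (h1 : es.psi1 i l a) (h2 : es.psi2 i a phi)
    (h3 : es.psi3 i l a t) (h4 : es.psi4 i a phi)
    (hfs : es.FairSend i l) :
    es.FairSpec i l phi t := by
  subst hsrc
  exact ⟨es.phi1spec_of_psi phi h1 h2, es.phi2spec_of_psi t h1 h3,
    es.phi3spec_of_psi ht h3 h4 hfs⟩

/-- The fairness program satisfies the fairness specification: in any event
structure satisfying the event-structure axioms, if all four clauses
(ψ₁)–(ψ₄) of `Fair-Pg(φ,t,l,a)` hold and `FairSend(l)` holds, then the
specification `Fair(φ,t,l)`, i.e. the conjunction of (φ₁), (φ₂), (φ₃),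
holds. -/
theorem fair_pg_satisfies_fair_spec
    {AG Links Act Val X : Type} {source dest : Links → AG} {bot : Val}
    {mv : Links → X}
    (es : EventStructure AG Links Act Val X source dest bot mv)
    (i j : AG) (hij : i ≠ j) (l : Links) (hsrc : source l = i)
    (hdest : dest l = j) (a : Act)
    (phi : (X → Val) → Prop) (t : (X → Val) → Val) (ht : ∀ s, t s ≠ bot)
    (h1 : es.psi1 i l a) (h2 : es.psi2 i a phi)
    (h3 : es.psi3 i l a t) (h4 : es.psi4 i a phi)
    (hfs : es.FairSend i l) :
    es.FairSpec i l phi t :=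
  fair_pg_satisfies_fair_spec_general es i l hsrc a phi t ht h1 h2 h3 h4 hfs
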